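/- arXiv:math/0407116 — 3 statements merged into one kernel-verified Lean document; each statement's English description precedes it below -/
import Mathlib

section
/- For every X : ZMod n → ZMod 2, the sequence i ↦ rank C(𝔟^i X) of ranks over ZMod 2 is non-increasing in i, and for every i one has rank C(𝔟^i X) ≥ rank C(𝔟^{ι(2,n)} X); i.e. the minimum of the sequence is attained at i = ι(2,n). -/
/-! Circulants are polynomials in the cyclic shift `T`, which satisfies `Tⁿ = 1`. Over `ZMod 2`
the Baker transformation is the Frobenius of this commutative algebra, `C(𝔟v) = C(v)²`, so
`rank C(𝔟ⁱv) = rank C(v)^(2ⁱ)` is antitone in `i`. Write `n = 2ᵏm` with `m` odd. Since `Xᵐ - 1`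
is squarefree, every `q` satisfies `q ≡ q²s` modulo `Xᵐ - 1`, and raising this to the power `2ʲ`
with `j ≥ k` gives `q^(2ʲ) ≡ q^(2ʲ⁺¹)s'` modulo `(Xᵐ - 1)^(2ᵏ) = Xⁿ - 1`. Hence
`C(v)^(2ʲ) = C(v)^(2ʲ⁺¹)·S`, and the ranks stop decreasing at `i = k`. -/

/-- The discrete Baker transformation: `(𝔟 X) i = ∑_{j : 2*j = i} X j`. -/
def baker {n : ℕ} [NeZero n] (X : ZMod n → ZMod 2) : ZMod n → ZMod 2 :=
  fun i => ∑ j ∈ Finset.univ.filter (fun j : ZMod n => (2 : ZMod n) * j = i), X j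


/-- The circulant matrix of a vector `X : ZMod n → ZMod 2`, with entries
`C(X) i j = X (j - i)`. -/
def circulantVec {n : ℕ} (X : ZMod n → ZMod 2) : Matrix (ZMod n) (ZMod n) (ZMod 2) :=
  Matrix.of fun i j => X (j - i)

open Polynomial Matrix

theorem exists_eq_pow_mul_add_mul_of_squarefree {R : Type*} [EuclideanDomain R]
    [DecompositionMonoid R] {Q : R} (hQ : Squarefree Q) (q : R) {N : ℕ} (hN : N ≠ 0) :
    ∃ s w, q = q ^ N * s + Q * w := by
  classical
  obtain ⟨t, ht⟩ : EuclideanDomain.gcd (q ^ N) Q ∣ q :=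
    ((hQ.squarefree_of_dvd (EuclideanDomain.gcd_dvd_right _ _)).dvd_pow_iff_dvd hN).mp
      (EuclideanDomain.gcd_dvd_left _ _)
  refine ⟨EuclideanDomain.gcdA (q ^ N) Q * t, EuclideanDomain.gcdB (q ^ N) Q * t, ?_⟩
  conv_lhs => rw [ht, EuclideanDomain.gcd_eq_gcd_ab]
  ring

theorem exists_pow_expChar_pow_eq_of_eq_pow_mul_add {R : Type*} [CommSemiring R] {p : ℕ}
    [ExpChar R p] {a s b c : R} (h : a = a ^ p * s + b * c) {k j : ℕ} (hkj : k ≤ j) :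
    ∃ s' c', a ^ p ^ j = a ^ p ^ (j + 1) * s' + b ^ p ^ k * c' := by
  refine ⟨s ^ p ^ j, b ^ (p ^ j - p ^ k) * c ^ p ^ j, ?_⟩
  have hpk : p ^ k ≤ p ^ j := Nat.pow_le_pow_right (expChar_pos R p) hkj
  conv_lhs => rw [h, add_pow_expChar_pow, mul_pow, mul_pow, ← pow_mul, ← pow_succ',
    ← pow_mul_pow_sub b hpk]
  ring

theorem Polynomial.exists_pow_char_pow_eq_mul_add_X_pow_sub_one {K : Type*} [Field K]
    (p : ℕ) [Fact p.Prime] [CharP K p] {n : ℕ} (hn : n ≠ 0) (q : K[X]) {j : ℕ}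
    (hj : padicValNat p n ≤ j) :
    ∃ s w, q ^ p ^ j = q ^ p ^ (j + 1) * s + (X ^ n - 1) * w := by
  set k := padicValNat p n
  set m := Nat.divMaxPow n p
  have hnm : (X ^ m - 1 : K[X]) ^ p ^ k = X ^ n - 1 := by
    rw [sub_pow_char_pow, one_pow, ← pow_mul, mul_comm, Nat.pow_padicValNat_mul_divMaxPow]
  have hsq : Squarefree (X ^ m - 1 : K[X]) := by
    have hm : ¬ p ∣ m := Nat.not_dvd_divMaxPow (Fact.out : p.Prime).one_lt hn
    simpa using (separable_X_pow_sub_C' p m (1 : K) hm one_ne_zero).squarefree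
  obtain ⟨s, w, hsw⟩ :=
    exists_eq_pow_mul_add_mul_of_squarefree hsq q (Fact.out : p.Prime).ne_zero
  rw [← hnm]
  exact exists_pow_expChar_pow_eq_of_eq_pow_mul_add hsw hj

namespace Matrix

theorem circulant_single_mul_circulant_single {ι R : Type*} [AddGroup ι] [Fintype ι]
    [DecidableEq ι] [Semiring R] (i j : ι) (a b : R) :
    circulant (Pi.single i a) * circulant (Pi.single j b) =
      circulant (Pi.single (i + j) (a * b)) := by
  rw [circulant_mul, circulant_inj, mulVec_single]
  ext x
  by_cases h : x = i + j <;> simp [h, sub_eq_iff_eq_add]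

theorem circulant_single_one_pow {ι R : Type*} [AddGroupWithOne ι] [Fintype ι]
    [DecidableEq ι] [Semiring R] (k : ℕ) :
    circulant (Pi.single (1 : ι) (1 : R)) ^ k = circulant (Pi.single (k : ι) 1) := by
  induction k with
  | zero => simp
  | succ k ih => rw [pow_succ, ih, circulant_single_mul_circulant_single, mul_one, Nat.cast_succ]

theorem circulant_sum {ι κ R : Type*} [AddCommMonoid R] [Sub κ] (s : Finset ι)
    (v : ι → κ → R) :
    circulant (∑ i ∈ s, v i) = ∑ i ∈ s, circulant (v i) := by
  ext
  simp [circulant_apply, Finset.sum_apply, Matrix.sum_apply]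

theorem circulant_single_natCast_eq_smul_pow {ι R : Type*} [AddGroupWithOne ι] [Fintype ι]
    [DecidableEq ι] [Semiring R] (k : ℕ) (c : R) :
    circulant (Pi.single (k : ι) c) = c • circulant (Pi.single (1 : ι) (1 : R)) ^ k := by
  rw [circulant_single_one_pow, ← circulant_smul, ← Pi.single_smul', smul_eq_mul, mul_one]

variable {R : Type*} [CommSemiring R] {n : ℕ} [NeZero n]

theorem circulant_single_one_pow_card :
    circulant (Pi.single (1 : ZMod n) (1 : R)) ^ n = 1 := by
  rw [circulant_single_one_pow, ZMod.natCast_self, circulant_single_one]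

theorem circulant_single_eq_smul_pow (j : ZMod n) (c : R) :
    circulant (Pi.single j c) = c • circulant (Pi.single (1 : ZMod n) (1 : R)) ^ j.val := by
  simpa using circulant_single_natCast_eq_smul_pow (ι := ZMod n) j.val c

theorem circulant_eq_aeval (v : ZMod n → R) :
    circulant v =
      aeval (circulant (Pi.single (1 : ZMod n) (1 : R))) (∑ j, C (v j) * X ^ j.val) := by
  simp only [map_sum, _root_.map_mul, aeval_C, aeval_X_pow, ← Algebra.smul_def,
    ← circulant_single_eq_smul_pow, ← circulant_sum, Finset.univ_sum_single]

theorem rank_circulant_pow_char_pow_le {K : Type*} [Field K] (p : ℕ) [Fact p.Prime]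
    [CharP K p] (v : ZMod n → K) {j : ℕ} (hj : padicValNat p n ≤ j) :
    (circulant v ^ p ^ j).rank ≤ (circulant v ^ p ^ (j + 1)).rank := by
  obtain ⟨s, w, h⟩ := exists_pow_char_pow_eq_mul_add_X_pow_sub_one p (NeZero.ne n)
    (∑ j, C (v j) * X ^ j.val) hj
  have hmat := congrArg (aeval (circulant (Pi.single (1 : ZMod n) (1 : K)))) h
  rw [map_add, _root_.map_mul, _root_.map_mul, map_pow, map_pow, map_sub, map_pow, aeval_X,
    _root_.map_one, circulant_single_one_pow_card, sub_self, zero_mul, add_zero,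
    ← circulant_eq_aeval] at hmat
  rw [hmat]
  exact rank_mul_le_left _ _

theorem antitone_rank_pow {m R : Type*} [Fintype m] [DecidableEq m] [CommRing R]
    [StrongRankCondition R] (A : Matrix m m R) : Antitone fun k : ℕ => (A ^ k).rank :=
  fun k l hkl => by
    simpa only [pow_mul_pow_sub A hkl] using rank_mul_le_left (A ^ k) (A ^ (l - k))

end Matrix

section Baker

variable {n : ℕ} [NeZero n]

theorem baker_eq_sum_single (v : ZMod n → ZMod 2) : baker v = ∑ j, Pi.single (2 * j) (v j) := by
  ext i
  simp [baker, Finset.sum_apply, Pi.single_apply, Finset.sum_filter, eq_comm]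

theorem circulant_baker (v : ZMod n → ZMod 2) : circulant (baker v) = circulant v ^ 2 := by
  have hfrob : (∑ j, C (v j) * X ^ j.val) ^ 2 = ∑ j, C (v j) * X ^ (2 * j.val) := by
    simp_rw [CharTwo.sum_sq, mul_pow, ← C_pow, ZMod.pow_card, ← pow_mul, mul_comm]
  rw [circulant_eq_aeval v, ← map_pow, hfrob, baker_eq_sum_single, circulant_sum]
  simp only [map_sum, _root_.map_mul, aeval_C, aeval_X_pow, ← Algebra.smul_def]
  refine Finset.sum_congr rfl fun j _ => ?_
  rw [show 2 * j = ((2 * j.val : ℕ) : ZMod n) by push_cast; rw [ZMod.natCast_zmod_val],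
    circulant_single_natCast_eq_smul_pow]

theorem circulant_baker_iterate (v : ZMod n → ZMod 2) (i : ℕ) :
    circulant (baker^[i] v) = circulant v ^ 2 ^ i := by
  induction i with
  | zero => simp
  | succ i ih => rw [Function.iterate_succ_apply', circulant_baker, ih, ← pow_mul, ← pow_succ]

theorem rank_circulantVec (v : ZMod n → ZMod 2) : (circulantVec v).rank = (circulant v).rank :=
  rank_transpose (circulant v)

end Baker

theorem rank_circulant_baker_antitone {n : ℕ} [NeZero n] (X : ZMod n → ZMod 2) :
    (∀ i j : ℕ, i ≤ j →
      (circulantVec (baker^[j] X)).rank ≤ (circulantVec (baker^[i] X)).rank) ∧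
    (∀ i : ℕ,
      (circulantVec (baker^[padicValNat 2 n] X)).rank ≤ (circulantVec (baker^[i] X)).rank) := by
  set f : ℕ → ℕ := fun i => (circulant X ^ 2 ^ i).rank
  have hf (i : ℕ) : (circulantVec (baker^[i] X)).rank = f i := by
    rw [rank_circulantVec, circulant_baker_iterate]
  have hanti : Antitone f :=
    (circulant X).antitone_rank_pow.comp_monotone (pow_right_monotone one_le_two)
  have hmono : MonotoneOn f (Set.Ici (padicValNat 2 n)) :=
    monotoneOn_nat_Ici_of_le_succ fun j hj => rank_circulant_pow_char_pow_le 2 X hj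
  simp only [hf]
  refine ⟨fun i j hij => hanti hij, fun i => ?_⟩
  rcases le_total i (padicValNat 2 n) with hi | hi
  · exact hanti hi
  · exact hmono Set.self_mem_Ici hi hi
end

section
/- For every X : ZMod n → ZMod 2 the following three statements are equivalent: (1) 𝔟^{𝔠(n)} X = X; (2) X belongs to a cycle of the Baker transformation, i.e. there exists t > 0 with 𝔟^t X = X; (3) X is 𝔟-swept, i.e. X j = 0 for every j : ZMod n whose canonical representative j.val is not divisible by 2^{ι(2,n)}. -/
/-
`𝔟^k X i` is the sum of `X j` over the solutions of `2^k j = i`. For `k ≥ ι(2,n)` every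
`2^k j` is a multiple of `2^ι(2,n)`, so a vector lying on a cycle (`𝔟^t X = X`, hence
`𝔟^{tι} X = X`) is swept. Conversely, writing `n = 2^ι n'`, we have `n' ∣ 2^𝔠 - 1`, so
multiplication by `2^𝔠` fixes every multiple of `2^ι`; on a swept vector the sum for
`𝔟^𝔠 X i` then reduces to the single term `X i`.
-/

open Matrix

/-- The critical number `𝔠(n)`. -/
noncomputable def cFun (n : ℕ) : ℕ :=
  if 1 < n / 2 ^ (padicValNat 2 n) then orderOf (2 : ZMod (n / 2 ^ (padicValNat 2 n))) else 1

open Finset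

namespace ZMod

theorem dvd_val_natCast_mul {n d x : ℕ} [NeZero n] (hdn : d ∣ n) (hdx : d ∣ x) (j : ZMod n) :
    d ∣ ((x : ZMod n) * j).val := by
  rw [← natCast_zmod_val j, ← Nat.cast_mul, val_natCast, Nat.dvd_mod_iff hdn]
  exact hdx.mul_right _

theorem natCast_mul_eq_self {n d x : ℕ} [NeZero n] (hx : x * d ≡ d [MOD n]) {j : ZMod n}
    (hj : d ∣ j.val) : (x : ZMod n) * j = j := by
  obtain ⟨q, hq⟩ := hj
  rw [← natCast_zmod_val j, hq, Nat.cast_mul, ← mul_assoc, ← Nat.cast_mul,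
    (natCast_eq_natCast_iff _ _ _).mpr hx]

end ZMod

section Baker

variable {n : ℕ} [NeZero n]

theorem baker_iterate_apply (k : ℕ) (X : ZMod n → ZMod 2) (i : ZMod n) :
    baker^[k] X i = ∑ j ∈ univ.filter (fun j : ZMod n => (2 : ZMod n) ^ k * j = i), X j := by
  induction k generalizing i with
  | zero => simp [filter_eq']
  | succ k ih =>
    rw [Function.iterate_succ_apply', baker]
    simp_rw [ih, sum_fiberwise_eq_sum_filter, mem_filter, mem_univ, true_and, pow_succ', mul_assoc]

theorem baker_iterate_apply_eq_zero {d k : ℕ} (hdn : d ∣ n) (hdk : d ∣ 2 ^ k)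
    (X : ZMod n → ZMod 2) {i : ZMod n} (hi : ¬ d ∣ i.val) : baker^[k] X i = 0 := by
  rw [baker_iterate_apply]
  refine sum_eq_zero fun j hj => absurd ?_ hi
  rw [← (mem_filter.mp hj).2]
  exact_mod_cast ZMod.dvd_val_natCast_mul hdn hdk j

theorem baker_iterate_eq_self {c d : ℕ} (hc : 2 ^ c * d ≡ d [MOD n]) {X : ZMod n → ZMod 2}
    (hX : ∀ j : ZMod n, ¬ d ∣ j.val → X j = 0) : baker^[c] X = X := by
  have hfix : ∀ j : ZMod n, X j ≠ 0 → (2 : ZMod n) ^ c * j = j := fun j hj => by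
    exact_mod_cast ZMod.natCast_mul_eq_self hc (not_imp_comm.mp (hX j) hj)
  funext i
  have hsupp : ∀ j ∈ univ.filter (fun j : ZMod n => (2 : ZMod n) ^ c * j = i), X j ≠ 0 → j = i :=
    fun j hj hXj => (hfix j hXj).symm.trans (mem_filter.mp hj).2
  rw [baker_iterate_apply]
  by_cases hi : (2 : ZMod n) ^ c * i = i
  · exact sum_eq_single_of_mem i (mem_filter.mpr ⟨mem_univ i, hi⟩) fun j hj hji =>
      of_not_not fun hXj => hji (hsupp j hj hXj)
  · rw [sum_eq_zero fun j hj => of_not_not fun hXj => hi (hsupp j hj hXj ▸ hfix j hXj)]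
    exact (of_not_not fun hXi => hi (hfix i hXi)).symm

end Baker

theorem div_two_pow_padicValNat_pos (n : ℕ) [NeZero n] : 0 < n / 2 ^ padicValNat 2 n := by
  simpa [Nat.factorization_def n Nat.prime_two] using Nat.ordCompl_pos 2 (NeZero.ne n)

theorem coprime_two_div_two_pow_padicValNat (n : ℕ) [NeZero n] :
    Nat.Coprime 2 (n / 2 ^ padicValNat 2 n) := by
  simpa [Nat.factorization_def n Nat.prime_two] using
    Nat.coprime_ordCompl Nat.prime_two (NeZero.ne n)

theorem cFun_eq_orderOf (n : ℕ) [NeZero n] :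
    cFun n = orderOf (2 : ZMod (n / 2 ^ padicValNat 2 n)) := by
  unfold cFun
  split_ifs with h
  · rfl
  · rw [show n / 2 ^ padicValNat 2 n = 1 by have := div_two_pow_padicValNat_pos n; omega]
    exact (orderOf_eq_one_iff.mpr (Subsingleton.elim _ _)).symm

theorem cFun_pos (n : ℕ) [NeZero n] : 0 < cFun n := by
  set m := n / 2 ^ padicValNat 2 n
  have : NeZero m := ⟨(div_two_pow_padicValNat_pos n).ne'⟩
  have hunit : ((ZMod.unitOfCoprime 2 (coprime_two_div_two_pow_padicValNat n) : (ZMod m)ˣ) : ZMod m)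
      = 2 := by simp
  rw [cFun_eq_orderOf, ← hunit, orderOf_units]
  exact orderOf_pos _

theorem two_pow_cFun_mul_modEq (n : ℕ) [NeZero n] :
    2 ^ cFun n * 2 ^ padicValNat 2 n ≡ 2 ^ padicValNat 2 n [MOD n] := by
  have hm : 2 ^ cFun n ≡ 1 [MOD n / 2 ^ padicValNat 2 n] := by
    refine (ZMod.natCast_eq_natCast_iff _ _ _).mp ?_
    push_cast
    rw [cFun_eq_orderOf]
    exact pow_orderOf_eq_one _
  have := hm.mul_left' (2 ^ padicValNat 2 n)
  rwa [Nat.mul_div_cancel' pow_padicValNat_dvd, mul_one, mul_comm] at this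

theorem baker_cycle_tfae {n : ℕ} [NeZero n] (X : ZMod n → ZMod 2) :
    (baker^[cFun n] X = X ↔ ∃ t : ℕ, 0 < t ∧ baker^[t] X = X) ∧
    ((∃ t : ℕ, 0 < t ∧ baker^[t] X = X) ↔
      ∀ j : ZMod n, ¬ (2 ^ (padicValNat 2 n) ∣ j.val) → X j = 0) := by
  set a := padicValNat 2 n
  have hcycle_swept : (∃ t : ℕ, 0 < t ∧ baker^[t] X = X) →
      ∀ j : ZMod n, ¬ 2 ^ a ∣ j.val → X j = 0 := by
    rintro ⟨t, ht, hX⟩ j hj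
    rw [← Function.iterate_fixed hX a, ← Function.iterate_mul]
    exact baker_iterate_apply_eq_zero pow_padicValNat_dvd
      (pow_dvd_pow 2 (Nat.le_mul_of_pos_left a ht)) X hj
  have hswept_fixed : (∀ j : ZMod n, ¬ 2 ^ a ∣ j.val → X j = 0) → baker^[cFun n] X = X :=
    baker_iterate_eq_self (two_pow_cFun_mul_modEq n)
  exact ⟨⟨fun h => ⟨cFun n, cFun_pos n, h⟩, fun h => hswept_fixed (hcycle_swept h)⟩,
    ⟨hcycle_swept, fun h => ⟨cFun n, cFun_pos n, hswept_fixed h⟩⟩⟩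
end

section
/- Determinant reduction: let X : ZMod n → ZMod 2, let k = ι(2,n) and n' = n / 2^k, and define the 𝔟-compression Y : ZMod n' → ZMod 2 of X by Y i = (𝔟^k X) ((2^k * i.val : ℕ) : ZMod n). Then the determinant over ZMod 2 of the n×n circulant C(X) equals the determinant over ZMod 2 of the n'×n' circulant C(Y). -/
open Matrix

lemma zmod2_mul_self : ∀ x : ZMod 2, x * x = x := by decide

lemma zmod2_add_self : ∀ x : ZMod 2, x + x = 0 := by decide

lemma zmod2_cases : ∀ x : ZMod 2, x = 0 ∨ x = 1 := by decide

/-- Convolution square identity in characteristic 2. -/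
lemma conv_sq {n : ℕ} [NeZero n] (X : ZMod n → ZMod 2) (s : ZMod n) :
    ∑ d : ZMod n, X d * X (s - d) = baker X s := by
  rw [baker, ← Finset.sum_filter_add_sum_filter_not Finset.univ
    (fun d : ZMod n => (2 : ZMod n) * d = s)]
  have h1 : ∑ d ∈ Finset.univ.filter (fun d : ZMod n => (2 : ZMod n) * d = s),
      X d * X (s - d)
      = ∑ d ∈ Finset.univ.filter (fun d : ZMod n => (2 : ZMod n) * d = s), X d := by
    refine Finset.sum_congr rfl fun d hd => ?_
    have h2d : (2 : ZMod n) * d = s := (Finset.mem_filter.mp hd).2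
    have hsd : s - d = d := by linear_combination -h2d
    rw [hsd, zmod2_mul_self]
  have h2 : ∑ d ∈ Finset.univ.filter (fun d : ZMod n => ¬ (2 : ZMod n) * d = s),
      X d * X (s - d) = 0 := by
    refine Finset.sum_involution (fun d _ => s - d) (fun d hd => ?_) (fun d hd _ => ?_)
      (fun d hd => ?_) (fun d hd => ?_)
    · have hss : s - (s - d) = d := by ring
      rw [hss, mul_comm]
      exact zmod2_add_self _
    · have h2d : ¬ (2 : ZMod n) * d = s := by simpa using hd
      intro h
      exact h2d (by linear_combination -h)
    · have h2d : ¬ (2 : ZMod n) * d = s := by simpa using hd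
      simp only [Finset.mem_filter, Finset.mem_univ, true_and]
      intro h
      exact h2d (by linear_combination -h)
    · show s - (s - d) = d
      ring
  rw [h1, h2, add_zero]

lemma circulantVec_baker {n : ℕ} [NeZero n] (X : ZMod n → ZMod 2) :
    circulantVec (baker X) = circulantVec X * circulantVec X := by
  ext i j
  rw [Matrix.mul_apply]
  show baker X (j - i) = ∑ l, X (l - i) * X (j - l)
  rw [← conv_sq X (j - i)]
  rw [← Equiv.sum_comp (Equiv.addLeft i)
    (fun l : ZMod n => X (l - i) * X (j - l))]
  refine Finset.sum_congr rfl fun d _ => ?_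
  have h1 : i + d - i = d := by ring
  have h2 : j - (i + d) = j - i - d := by ring
  simp only [Equiv.coe_addLeft, h1, h2]

lemma det_circulantVec_baker {n : ℕ} [NeZero n] (X : ZMod n → ZMod 2) :
    (circulantVec (baker X)).det = (circulantVec X).det := by
  rw [circulantVec_baker, Matrix.det_mul, zmod2_mul_self]

lemma det_circulantVec_baker_iter {n : ℕ} [NeZero n] (k : ℕ) (X : ZMod n → ZMod 2) :
    (circulantVec (baker^[k] X)).det = (circulantVec X).det := by
  induction k with
  | zero => rfl
  | succ k ih =>
    rw [Function.iterate_succ_apply', det_circulantVec_baker, ih]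

lemma baker_iter_support {n : ℕ} [NeZero n] (k : ℕ) (X : ZMod n → ZMod 2) (i : ZMod n)
    (h : baker^[k] X i ≠ 0) : ∃ j : ZMod n, (2 : ZMod n) ^ k * j = i := by
  induction k generalizing i with
  | zero => exact ⟨i, by simp⟩
  | succ k ih =>
    rw [Function.iterate_succ_apply'] at h
    obtain ⟨j, hj, hj2⟩ := Finset.exists_ne_zero_of_sum_ne_zero h
    have h2j : (2 : ZMod n) * j = i := (Finset.mem_filter.mp hj).2
    obtain ⟨l, hl⟩ := ih j hj2
    exact ⟨l, by rw [pow_succ, mul_comm ((2:ZMod n)^k) 2, mul_assoc, hl, h2j]⟩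

theorem det_reduction {n : ℕ} [NeZero n] (k n' : ℕ) [NeZero n']
    (hk : k = padicValNat 2 n) (hn' : n' = n / 2 ^ k)
    (X : ZMod n → ZMod 2) :
    (circulantVec X).det =
      (circulantVec (fun i : ZMod n' =>
        baker^[k] X ((2 ^ k * i.val : ℕ) : ZMod n))).det := by
  have hn : n ≠ 0 := NeZero.ne n
  haveI : NeZero (2 ^ k) := ⟨pow_ne_zero _ two_ne_zero⟩
  have hfact : k = n.factorization 2 := by
    rw [hk, Nat.factorization_def n Nat.prime_two]
  have hmn : 2 ^ k * n' = n := by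
    rw [hn', hfact]
    exact Nat.ordProj_mul_ordCompl_eq_self n 2
  have cop : Nat.Coprime (2 ^ k) n' := by
    rw [hn', hfact]
    exact Nat.Coprime.pow_left _ (Nat.coprime_ordCompl Nat.prime_two hn)
  -- the CRT ring isomorphism
  let e : ZMod n ≃+* ZMod (2 ^ k) × ZMod n' := hmn ▸ ZMod.chineseRemainder cop
  set Z : ZMod n → ZMod 2 := baker^[k] X with hZ
  set W : ZMod n' → ZMod 2 := fun b => Z (e.symm (0, b)) with hW
  have hcast : ((2 ^ k : ℕ) : ZMod n) = (2 : ZMod n) ^ k := by push_cast; ring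
  -- Z vanishes away from the subgroup `{0} × ZMod n'`
  have hZsupp : ∀ p : ZMod (2 ^ k) × ZMod n', p.1 ≠ 0 → Z (e.symm p) = 0 := by
    intro p hp
    by_contra h
    obtain ⟨j, hj⟩ := baker_iter_support k X (e.symm p) h
    apply hp
    have hep : e ((2 : ZMod n) ^ k * j) = p := by rw [hj, e.apply_symm_apply]
    have hmul : e ((2 : ZMod n) ^ k * j)
        = ((2 ^ k : ℕ) : ZMod (2 ^ k) × ZMod n') * e j := by
      rw [_root_.map_mul, ← hcast, map_natCast]
    rw [hmul] at hep
    have := congrArg Prod.fst hep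
    rw [← this]
    rw [Prod.fst_mul, Prod.fst_natCast, ZMod.natCast_self, zero_mul]
  -- the circulant of Z is (up to reindexing) block-diagonal
  have hblock : (circulantVec Z).submatrix e.symm.toEquiv e.symm.toEquiv
      = Matrix.reindex (Equiv.prodComm (ZMod n') (ZMod (2 ^ k)))
        (Equiv.prodComm (ZMod n') (ZMod (2 ^ k)))
        (Matrix.blockDiagonal fun _ : ZMod (2 ^ k) => circulantVec W) := by
    ext ⟨a, b⟩ ⟨a', b'⟩
    show Z (e.symm (a', b') - e.symm (a, b)) = _
    rw [← map_sub, Prod.mk_sub_mk]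
    simp only [Matrix.reindex_apply, Matrix.submatrix_apply, Equiv.prodComm_symm,
      Equiv.prodComm_apply, Prod.swap_prod_mk, Matrix.blockDiagonal_apply]
    by_cases hA : a = a'
    · subst hA
      rw [if_pos rfl, sub_self]
      rfl
    · rw [if_neg hA]
      exact hZsupp (a' - a, b' - b) (sub_ne_zero.mpr (Ne.symm hA))
  -- relation between Y and W
  have hYW : ∀ c : ZMod n',
      Z (((2 ^ k * c.val : ℕ) : ZMod n)) = W (((2 ^ k : ℕ) : ZMod n') * c) := by
    intro c
    have he : e (((2 ^ k * c.val : ℕ) : ZMod n))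
        = ((0 : ZMod (2 ^ k)), ((2 ^ k : ℕ) : ZMod n') * c) := by
      rw [map_natCast]
      have h1 : ((2 ^ k * c.val : ℕ) : ZMod (2 ^ k)) = 0 := by
        rw [Nat.cast_mul, ZMod.natCast_self, zero_mul]
      have h2 : ((2 ^ k * c.val : ℕ) : ZMod n') = ((2 ^ k : ℕ) : ZMod n') * c := by
        rw [Nat.cast_mul, ZMod.natCast_rightInverse c]
      exact Prod.ext (by rw [Prod.fst_natCast, h1]) (by rw [Prod.snd_natCast, h2])
    have heq : (((2 ^ k * c.val : ℕ)) : ZMod n)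
        = e.symm ((0 : ZMod (2 ^ k)), ((2 ^ k : ℕ) : ZMod n') * c) := by
      rw [← he, e.symm_apply_apply]
    rw [heq]
  -- 2^k is a unit mod n'
  obtain ⟨u, hu⟩ : IsUnit (((2 ^ k : ℕ) : ZMod n')) :=
    (ZMod.isUnit_iff_coprime (2 ^ k) n').mpr cop
  have hCY : circulantVec (fun c : ZMod n' => Z (((2 ^ k * c.val : ℕ) : ZMod n)))
      = (circulantVec W).submatrix (Units.mulLeft u) (Units.mulLeft u) := by
    ext i j
    show Z (((2 ^ k * (j - i).val : ℕ) : ZMod n))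
      = W ((u : ZMod n') * j - (u : ZMod n') * i)
    rw [hYW, ← mul_sub, hu]
  have hx : ∀ x : ZMod 2, x ^ (2 ^ k) = x := by
    intro x
    rcases zmod2_cases x with h | h <;> subst h
    · exact zero_pow (NeZero.ne (2 ^ k))
    · exact one_pow _
  calc (circulantVec X).det = (circulantVec Z).det := (det_circulantVec_baker_iter k X).symm
    _ = ((circulantVec Z).submatrix e.symm.toEquiv e.symm.toEquiv).det :=
        (Matrix.det_submatrix_equiv_self _ _).symm
    _ = (circulantVec W).det ^ (2 ^ k) := by
        rw [hblock, Matrix.det_reindex_self, Matrix.det_blockDiagonal,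
          Finset.prod_const, Finset.card_univ, ZMod.card]
    _ = (circulantVec W).det := hx _
    _ = (circulantVec (fun c : ZMod n' => Z (((2 ^ k * c.val : ℕ) : ZMod n)))).det := by
        rw [hCY, Matrix.det_submatrix_equiv_self]
    _ = _ := rfl
end
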